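/- Privacy amplification via depolarizing noise (Lemma 4): Let X be a type with adjacency relation Adj, Y a measurable space, and A : X → Measure Y a mechanism of probability measures satisfying (ε, δ)-DP with ε, δ ≥ 0. Let n be a nonempty finite type with d := Fintype.card n, let enc : Y → EuclideanSpace ℂ n be a measurable map with ‖enc y‖ = 1 for all y, and let φ ∈ [0,1] satisfy φ ≤ ‖⟪enc y, enc y'⟫‖² for all y, y' ∈ Y. Let U ∈ Matrix.unitaryGroup n ℂ, let E : Fin m → Matrix n n ℂ be a POVM, and let p ∈ [0,1]. Define the noisy circuit C̃ : Y → Measure (Fin m) by C̃ y := ∑_{i : Fin m} ENNReal.ofReal(Re(Tr(E i * ((1 - p) • (U * ρ_{enc y} * Uᴴ) + (p/d) • 1)))) • Measure.dirac i, where ρ_w := Matrix.vecMulVec w (star w). Then the composed mechanism x ↦ (A x).bind C̃ satisfies (ε, (1 - p) * Real.sqrt(1 - φ) * δ)-differential privacy. -/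

import Mathlib

open MeasureTheory Matrix
open scoped ComplexOrder InnerProductSpace

/-- A mechanism `A : X → Measure Y` (each `A x` a probability measure) satisfies
`(ε, δ)`-differential privacy with respect to the adjacency relation `Adj`. -/
def DiffPrivate {X Y : Type*} [MeasurableSpace Y] (Adj : X → X → Prop)
    (A : X → Measure Y) (ε δ : ℝ) : Prop :=
  ∀ x x', Adj x x' → ∀ S : Set Y, MeasurableSet S →
    A x S ≤ ENNReal.ofReal (Real.exp ε) * A x' S + ENNReal.ofReal δ

/-- The density matrix of the pure state associated with a vector
`w : EuclideanSpace ℂ n`, i.e. the outer product `|w⟩⟨w|`. -/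
noncomputable def pureState {n : Type*} [Fintype n]
    (w : EuclideanSpace ℂ n) : Matrix n n ℂ :=
  Matrix.vecMulVec (w : n → ℂ) (star (w : n → ℂ))

/-- The noisy quantum circuit as a classical mechanism: encode `y`, apply the
unitary `U`, the depolarizing channel with parameter `p`, and measure the POVM
`E`; the result is the distribution over measurement outcomes. -/
noncomputable def noisyCircuit {Y : Type*} {n : Type*} [Fintype n] [DecidableEq n]
    {m : ℕ} (enc : Y → EuclideanSpace ℂ n) (U : Matrix.unitaryGroup n ℂ)
    (E : Fin m → Matrix n n ℂ) (p : ℝ) (y : Y) : Measure (Fin m) :=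
  ∑ i : Fin m,
    ENNReal.ofReal
      ((E i * ((1 - p) • ((U : Matrix n n ℂ) * pureState (enc y) * (U : Matrix n n ℂ)ᴴ)
          + (p / (Fintype.card n : ℝ)) • (1 : Matrix n n ℂ))).trace.re)
      • Measure.dirac i

/-!
For an effect `0 ≤ M ≤ 1` and unit vectors `u`, `v` with `⟪u, v⟫ ≥ 0` (rotate `v` by a phase), the
difference `⟪u, M u⟫ - ⟪v, M v⟫` equals both `re ⟪u - v, M (u + v)⟫` and
`-re ⟪u - v, (1 - M) (u + v)⟫`; the Cauchy–Schwarz inequalities for the positive forms `M` and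
`1 - M` together bound it by `‖u - v‖ ‖u + v‖ / 2 = √(1 - |⟪u, v⟫|²)`. Conjugation by `U` preserves
`0 ≤ M ≤ 1` and the depolarizing channel scales the difference by `1 - p`, so the probability the
noisy circuit gives any event varies with the input by at most `γ = (1 - p) √(1 - φ)`.
Post-processing an `(ε, δ)`-DP mechanism by such a kernel is `(ε, γ δ)`-DP: after subtracting the
infimum of the event probability, apply the DP inequality to each level set in the layer-cake
formula; only the levels in `(0, γ]` are nonempty.
-/

open RCLike

lemma four_mul_sq_le_mul {r α β X Y : ℝ} (hα : 0 ≤ α) (hβ : 0 ≤ β) (hαX : α ≤ X) (hβY : β ≤ Y)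
    (h : r ^ 2 ≤ α * β) (h' : r ^ 2 ≤ (X - α) * (Y - β)) : 4 * r ^ 2 ≤ X * Y := by
  have hcross : 2 * r ^ 2 ≤ α * (Y - β) + (X - α) * β := by
    nlinarith [sq_nonneg (α * (Y - β) - (X - α) * β), mul_nonneg hα (sub_nonneg.2 hβY),
      mul_nonneg (sub_nonneg.2 hαX) hβ, mul_le_mul h h' (sq_nonneg r) (mul_nonneg hα hβ)]
  nlinarith

namespace LinearMap

variable {𝕜 E : Type*} [RCLike 𝕜] [NormedAddCommGroup E] [InnerProductSpace 𝕜 E]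

theorem IsPositive.norm_inner_sq_le {T : E →ₗ[𝕜] E} (hT : T.IsPositive) (x y : E) :
    ‖⟪x, T y⟫_𝕜‖ ^ 2 ≤ re ⟪x, T x⟫_𝕜 * re ⟪y, T y⟫_𝕜 := by
  let c : PreInnerProductSpace.Core 𝕜 E :=
    { inner x y := ⟪x, T y⟫_𝕜
      conj_inner_symm x y := by rw [inner_conj_symm, hT.isSymmetric]
      re_inner_nonneg := hT.re_inner_nonneg_right
      add_left _ _ _ := inner_add_left _ _ _
      smul_left _ _ _ := inner_smul_left _ _ _ }
  have hcs := @InnerProductSpace.Core.inner_mul_inner_self_le 𝕜 E _ _ _ c x y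
  have hswap : ‖⟪y, T x⟫_𝕜‖ = ‖⟪x, T y⟫_𝕜‖ := by
    rw [← hT.isSymmetric, ← inner_conj_symm, RCLike.norm_conj]
  calc ‖⟪x, T y⟫_𝕜‖ ^ 2 = ‖⟪x, T y⟫_𝕜‖ * ‖⟪y, T x⟫_𝕜‖ := by rw [hswap, sq]
    _ ≤ _ := hcs

theorem IsSymmetric.re_inner_sub_map_add {T : E →ₗ[𝕜] E} (hT : T.IsSymmetric) (u v : E) :
    re ⟪u - v, T (u + v)⟫_𝕜 = re ⟪u, T u⟫_𝕜 - re ⟪v, T v⟫_𝕜 := by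
  have hcross : re ⟪v, T u⟫_𝕜 = re ⟪u, T v⟫_𝕜 := by
    rw [← hT, ← inner_conj_symm, RCLike.conj_re]
  simp only [map_add, inner_add_right, inner_sub_left, map_sub]
  linarith

theorem re_inner_one_sub_map_self (T : E →ₗ[𝕜] E) (x : E) :
    re ⟪x, (1 - T) x⟫_𝕜 = ‖x‖ ^ 2 - re ⟪x, T x⟫_𝕜 := by
  rw [sub_apply, Module.End.one_apply, inner_sub_right, map_sub, inner_self_eq_norm_sq]

theorem re_inner_map_self_sub_le_sqrt_re {T : E →ₗ[𝕜] E} (h0 : 0 ≤ T) (h1 : T ≤ 1) {u v : E}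
    (hu : ‖u‖ = 1) (hv : ‖v‖ = 1) :
    re ⟪u, T u⟫_𝕜 - re ⟪v, T v⟫_𝕜 ≤ √(1 - re ⟪u, v⟫_𝕜 ^ 2) := by
  have hT : T.IsPositive := (nonneg_iff_isPositive T).1 h0
  have hS : (1 - T).IsPositive := h1
  set r := re ⟪u, T u⟫_𝕜 - re ⟪v, T v⟫_𝕜
  have hrT : r = re ⟪u - v, T (u + v)⟫_𝕜 := (hT.isSymmetric.re_inner_sub_map_add u v).symm
  have hrS : -r = re ⟪u - v, (1 - T) (u + v)⟫_𝕜 := by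
    rw [hS.isSymmetric.re_inner_sub_map_add, re_inner_one_sub_map_self,
      re_inner_one_sub_map_self, hu, hv]
    ring
  have hre_sq (z : 𝕜) : re z ^ 2 ≤ ‖z‖ ^ 2 := by
    rw [sq]
    exact (re_sq_le_normSq z).trans_eq (normSq_eq_def' z)
  have hcsT : r ^ 2 ≤ re ⟪u - v, T (u - v)⟫_𝕜 * re ⟪u + v, T (u + v)⟫_𝕜 :=
    hrT ▸ (hre_sq _).trans (hT.norm_inner_sq_le _ _)
  have hcsS : r ^ 2 ≤ re ⟪u - v, (1 - T) (u - v)⟫_𝕜 * re ⟪u + v, (1 - T) (u + v)⟫_𝕜 := by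
    rw [← neg_sq, hrS]
    exact (hre_sq _).trans (hS.norm_inner_sq_le _ _)
  rw [re_inner_one_sub_map_self, re_inner_one_sub_map_self] at hcsS
  have hx := hS.re_inner_nonneg_right (u - v)
  have hy := hS.re_inner_nonneg_right (u + v)
  rw [re_inner_one_sub_map_self] at hx hy
  have key := four_mul_sq_le_mul (hT.re_inner_nonneg_right _) (hT.re_inner_nonneg_right _)
    (sub_nonneg.1 hx) (sub_nonneg.1 hy) hcsT hcsS
  rw [norm_sub_sq (𝕜 := 𝕜), norm_add_sq (𝕜 := 𝕜), hu, hv] at key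
  exact (le_abs_self r).trans (Real.abs_le_sqrt (by nlinarith))

theorem re_inner_map_self_sub_le_sqrt {T : E →ₗ[𝕜] E} (h0 : 0 ≤ T) (h1 : T ≤ 1) {u v : E}
    (hu : ‖u‖ = 1) (hv : ‖v‖ = 1) :
    re ⟪u, T u⟫_𝕜 - re ⟪v, T v⟫_𝕜 ≤ √(1 - ‖⟪u, v⟫_𝕜‖ ^ 2) := by
  -- rotating `v` by a phase `ζ` makes `⟪u, ζ • v⟫` real without changing `⟪v, T v⟫`
  obtain ⟨ζ, hζ, hζv⟩ := RCLike.exists_norm_eq_mul_self ⟪u, v⟫_𝕜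
  have hζζ : starRingEnd 𝕜 ζ * ζ = 1 := by rw [RCLike.conj_mul, hζ]; simp
  have hrot : re ⟪ζ • v, T (ζ • v)⟫_𝕜 = re ⟪v, T v⟫_𝕜 := by
    rw [map_smul, inner_smul_left, inner_smul_right, ← mul_assoc, hζζ, one_mul]
  have hphase : re ⟪u, ζ • v⟫_𝕜 = ‖⟪u, v⟫_𝕜‖ := by
    rw [inner_smul_right, ← hζv, RCLike.ofReal_re]
  have hζv' : ‖ζ • v‖ = 1 := by rw [norm_smul, hζ, hv, one_mul]
  have := re_inner_map_self_sub_le_sqrt_re h0 h1 hu hζv'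
  rwa [hrot, hphase] at this

end LinearMap

namespace Matrix

section Trace

variable {n : Type*} [Fintype n]

theorem trace_mul_conj (M ρ U : Matrix n n ℂ) :
    (M * (U * ρ * Uᴴ)).trace = (Uᴴ * M * U * ρ).trace := by
  rw [← Matrix.mul_assoc, ← Matrix.mul_assoc, trace_mul_comm, ← Matrix.mul_assoc,
    ← Matrix.mul_assoc]

variable [DecidableEq n]

theorem trace_mul_pureState (M : Matrix n n ℂ) (w : EuclideanSpace ℂ n) :
    (M * pureState w).trace = ⟪w, M.toEuclideanLin w⟫_ℂ := by
  rw [pureState, mul_vecMulVec, trace_vecMulVec]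
  rfl

theorem PosSemidef.toEuclideanLin_nonneg {M : Matrix n n ℂ} (hM : M.PosSemidef) :
    0 ≤ M.toEuclideanLin :=
  (LinearMap.nonneg_iff_isPositive _).2 (isPositive_toEuclideanLin_iff.2 hM)

theorem toEuclideanLin_le_one {M : Matrix n n ℂ} (hM : (1 - M).PosSemidef) :
    M.toEuclideanLin ≤ 1 := by
  have hone : (1 : Matrix n n ℂ).toEuclideanLin = 1 := toLpLin_one 2
  rw [LinearMap.le_def, ← hone, ← map_sub]
  exact isPositive_toEuclideanLin_iff.2 hM

theorem PosSemidef.re_trace_mul_pureState_nonneg {M : Matrix n n ℂ} (hM : M.PosSemidef)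
    (w : EuclideanSpace ℂ n) : 0 ≤ (M * pureState w).trace.re := by
  rw [trace_mul_pureState]
  exact (isPositive_toEuclideanLin_iff.2 hM).re_inner_nonneg_right w

theorem re_trace_mul_pureState_sub_le {M : Matrix n n ℂ} (h0 : M.PosSemidef)
    (h1 : (1 - M).PosSemidef) {u v : EuclideanSpace ℂ n} (hu : ‖u‖ = 1) (hv : ‖v‖ = 1) :
    (M * pureState u).trace.re - (M * pureState v).trace.re ≤ √(1 - ‖⟪u, v⟫_ℂ‖ ^ 2) := by
  rw [trace_mul_pureState, trace_mul_pureState]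
  exact LinearMap.re_inner_map_self_sub_le_sqrt h0.toEuclideanLin_nonneg
    (toEuclideanLin_le_one h1) hu hv

end Trace

section Depolarize

variable {n : Type*} [Fintype n] [DecidableEq n]

noncomputable def depolarize (p : ℝ) (ρ : Matrix n n ℂ) : Matrix n n ℂ :=
  (1 - p) • ρ + (p / (Fintype.card n : ℝ)) • 1

theorem re_trace_mul_depolarize (M ρ : Matrix n n ℂ) (p : ℝ) :
    (M * depolarize p ρ).trace.re
      = (1 - p) * (M * ρ).trace.re + p / Fintype.card n * M.trace.re := by
  simp only [depolarize, Matrix.mul_add, Matrix.mul_smul, mul_one, trace_add, trace_smul,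
    Complex.add_re, Complex.real_smul, Complex.re_ofReal_mul]

variable {p : ℝ} {M : Matrix n n ℂ} (U : unitaryGroup n ℂ)

theorem PosSemidef.re_trace_mul_depolarize_nonneg (hM : M.PosSemidef) (hp0 : 0 ≤ p)
    (hp1 : p ≤ 1) (w : EuclideanSpace ℂ n) :
    0 ≤ (M * depolarize p ((U : Matrix n n ℂ) * pureState w * (U : Matrix n n ℂ)ᴴ)).trace.re := by
  rw [re_trace_mul_depolarize, trace_mul_conj]
  exact add_nonneg
    (mul_nonneg (sub_nonneg.2 hp1)
      ((hM.conjTranspose_mul_mul_same _).re_trace_mul_pureState_nonneg w))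
    (mul_nonneg (by positivity) (Complex.nonneg_iff.1 hM.trace_nonneg).1)

theorem re_trace_mul_depolarize_sub_le (h0 : M.PosSemidef) (h1 : (1 - M).PosSemidef)
    (hp1 : p ≤ 1) {u v : EuclideanSpace ℂ n} (hu : ‖u‖ = 1) (hv : ‖v‖ = 1) :
    (M * depolarize p ((U : Matrix n n ℂ) * pureState u * (U : Matrix n n ℂ)ᴴ)).trace.re
      - (M * depolarize p ((U : Matrix n n ℂ) * pureState v * (U : Matrix n n ℂ)ᴴ)).trace.re
      ≤ (1 - p) * √(1 - ‖⟪u, v⟫_ℂ‖ ^ 2) := by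
  have h1' : (1 - (U : Matrix n n ℂ)ᴴ * M * U).PosSemidef := by
    simpa [Matrix.mul_sub, Matrix.sub_mul, ← star_eq_conjTranspose] using
      h1.conjTranspose_mul_mul_same (U : Matrix n n ℂ)
  rw [re_trace_mul_depolarize, re_trace_mul_depolarize, trace_mul_conj, trace_mul_conj,
    add_sub_add_right_eq_sub, ← mul_sub]
  exact mul_le_mul_of_nonneg_left
    (re_trace_mul_pureState_sub_le (h0.conjTranspose_mul_mul_same _) h1' hu hv) (sub_nonneg.2 hp1)

end Depolarize

end Matrix

open ENNReal Set

theorem MeasureTheory.Measure.sum_ofReal_smul_dirac_apply {ι : Type*} [Fintype ι]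
    [MeasurableSpace ι] [MeasurableSingletonClass ι] {w : ι → ℝ} (hw : ∀ i, 0 ≤ w i)
    (S : Set ι) [DecidablePred (· ∈ S)] :
    (∑ i, ENNReal.ofReal (w i) • dirac i) S
      = ENNReal.ofReal (∑ i ∈ Finset.univ with i ∈ S, w i) := by
  rw [ENNReal.ofReal_sum_of_nonneg fun i _ => hw i, Finset.sum_filter, Measure.finsetSum_apply]
  refine Finset.sum_congr rfl fun i _ => ?_
  by_cases hi : i ∈ S <;> simp [dirac_apply, hi]

theorem Real.exists_nonneg_forall_mem_Icc_of_sub_le {Y : Type*} {f : Y → ℝ} {γ : ℝ}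
    (hf0 : ∀ y, 0 ≤ f y) (hosc : ∀ y y', f y - f y' ≤ γ) :
    ∃ c, 0 ≤ c ∧ ∀ y, f y ∈ Icc c (c + γ) := by
  refine ⟨⨅ y, f y, Real.iInf_nonneg hf0, fun y => ⟨ciInf_le ⟨0, ?_⟩ y, ?_⟩⟩
  · rintro _ ⟨y', rfl⟩
    exact hf0 y'
  · have : Nonempty Y := ⟨y⟩
    have := le_ciInf fun y' => sub_le_comm.1 (hosc y y')
    linarith

namespace DiffPrivate

variable {X Y : Type*} [MeasurableSpace Y] {Adj : X → X → Prop} {A : X → Measure Y}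
  {ε δ γ : ℝ} {x x' : X} {f : Y → ℝ}

theorem lintegral_ofReal_le_of_mem_Icc (hDP : DiffPrivate Adj A ε δ) (hxx' : Adj x x')
    (hf : Measurable f) (hfγ : ∀ y, f y ∈ Icc 0 γ) :
    ∫⁻ y, ENNReal.ofReal (f y) ∂A x
      ≤ ENNReal.ofReal (Real.exp ε) * ∫⁻ y, ENNReal.ofReal (f y) ∂A x'
        + ENNReal.ofReal γ * ENNReal.ofReal δ := by
  have hlevel : ∀ t ∈ Ioi (0 : ℝ), A x {y | t ≤ f y}
      ≤ ENNReal.ofReal (Real.exp ε) * A x' {y | t ≤ f y}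
        + (Iic γ).indicator (fun _ => ENNReal.ofReal δ) t := by
    intro t _
    by_cases ht : t ≤ γ
    · rw [indicator_of_mem (mem_Iic.2 ht)]
      exact hDP x x' hxx' _ (measurableSet_le measurable_const hf)
    · have hempty : {y | t ≤ f y} = ∅ :=
        eq_empty_of_forall_notMem fun y hy => ht (le_trans hy (hfγ y).2)
      simp [hempty]
  have hf0 (μ : Measure Y) : 0 ≤ᵐ[μ] f := ae_of_all _ fun y => (hfγ y).1
  rw [lintegral_eq_lintegral_meas_le _ (hf0 _) hf.aemeasurable,
    lintegral_eq_lintegral_meas_le _ (hf0 _) hf.aemeasurable]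
  calc ∫⁻ t in Ioi 0, A x {y | t ≤ f y}
      ≤ ∫⁻ t in Ioi 0, (ENNReal.ofReal (Real.exp ε) * A x' {y | t ≤ f y}
          + (Iic γ).indicator (fun _ => ENNReal.ofReal δ) t) :=
        setLIntegral_mono' measurableSet_Ioi hlevel
    _ = ENNReal.ofReal (Real.exp ε) * (∫⁻ t in Ioi 0, A x' {y | t ≤ f y})
          + ENNReal.ofReal δ * volume (Ioc 0 γ) := by
        rw [lintegral_add_right _ (measurable_const.indicator measurableSet_Iic),
          lintegral_const_mul' _ _ ofReal_ne_top, lintegral_indicator_const measurableSet_Iic,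
          Measure.restrict_apply measurableSet_Iic, Iic_inter_Ioi]
    _ = _ := by
        rw [Real.volume_Ioc, sub_zero, mul_comm (ENNReal.ofReal δ)]

theorem lintegral_ofReal_le_of_sub_le (hA : ∀ x, IsProbabilityMeasure (A x))
    (hDP : DiffPrivate Adj A ε δ) (hε : 0 ≤ ε) (hxx' : Adj x x') (hf : Measurable f)
    (hf0 : ∀ y, 0 ≤ f y) (hosc : ∀ y y', f y - f y' ≤ γ) :
    ∫⁻ y, ENNReal.ofReal (f y) ∂A x
      ≤ ENNReal.ofReal (Real.exp ε) * ∫⁻ y, ENNReal.ofReal (f y) ∂A x'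
        + ENNReal.ofReal γ * ENNReal.ofReal δ := by
  obtain ⟨c, hc0, hfc⟩ := Real.exists_nonneg_forall_mem_Icc_of_sub_le hf0 hosc
  have hsplit : ∀ x, ∫⁻ y, ENNReal.ofReal (f y) ∂A x
      = ENNReal.ofReal c + ∫⁻ y, ENNReal.ofReal (f y - c) ∂A x := fun x => by
    rw [← mul_one (ENNReal.ofReal c), ← (hA x).measure_univ, ← lintegral_const,
      ← lintegral_add_left measurable_const]
    refine lintegral_congr fun y => ?_
    rw [← ENNReal.ofReal_add hc0 (sub_nonneg.2 (hfc y).1), add_sub_cancel]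
  have hshifted := hDP.lintegral_ofReal_le_of_mem_Icc hxx' (hf.sub_const c)
    fun y => ⟨sub_nonneg.2 (hfc y).1, sub_le_iff_le_add'.2 (hfc y).2⟩
  have hc : ENNReal.ofReal c ≤ ENNReal.ofReal (Real.exp ε) * ENNReal.ofReal c :=
    le_mul_of_one_le_left' (one_le_ofReal.2 (Real.one_le_exp hε))
  rw [hsplit x, hsplit x', mul_add, add_assoc]
  exact add_le_add hc hshifted

theorem bind {Z : Type*} [MeasurableSpace Z] (hA : ∀ x, IsProbabilityMeasure (A x))
    (hDP : DiffPrivate Adj A ε δ) (hε : 0 ≤ ε) {κ : Y → Measure Z} (hκ : Measurable κ)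
    [∀ y, IsFiniteMeasure (κ y)] (hγ : 0 ≤ γ)
    (hosc : ∀ S, MeasurableSet S → ∀ y y', (κ y S).toReal - (κ y' S).toReal ≤ γ) :
    DiffPrivate Adj (fun x => (A x).bind κ) ε (γ * δ) := by
  intro x x' hxx' S hS
  have hlift : ∀ μ : Measure Y, ∫⁻ y, κ y S ∂μ = ∫⁻ y, ENNReal.ofReal (κ y S).toReal ∂μ :=
    fun μ => lintegral_congr fun y => (ofReal_toReal (measure_ne_top _ _)).symm
  simp only [Measure.bind_apply hS hκ.aemeasurable, hlift, ENNReal.ofReal_mul hγ]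
  exact hDP.lintegral_ofReal_le_of_sub_le hA hε hxx'
    ((Measure.measurable_coe hS).comp hκ).ennreal_toReal (fun _ => toReal_nonneg) (hosc S hS)

end DiffPrivate

theorem Matrix.posSemidef_one_sub_sum {𝕜 ι n : Type*} [RCLike 𝕜] [Fintype ι] [Fintype n]
    [DecidableEq n] {E : ι → Matrix n n 𝕜} (hE : ∀ i, (E i).PosSemidef) (hEsum : ∑ i, E i = 1)
    (s : Finset ι) : (1 - ∑ i ∈ s, E i).PosSemidef := by
  classical
  rw [← hEsum, ← Finset.sum_sdiff (Finset.subset_univ s), add_sub_cancel_right]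
  exact posSemidef_sum _ fun i _ => hE i

section NoisyCircuit

variable {Y n : Type*} [Fintype n] [DecidableEq n] {m : ℕ} {enc : Y → EuclideanSpace ℂ n}
  (U : unitaryGroup n ℂ) {E : Fin m → Matrix n n ℂ} {p : ℝ}

theorem noisyCircuit_apply (hE : ∀ i, (E i).PosSemidef) (hp0 : 0 ≤ p) (hp1 : p ≤ 1) (y : Y)
    (S : Set (Fin m)) [DecidablePred (· ∈ S)] :
    noisyCircuit enc U E p y S = ENNReal.ofReal (((∑ i ∈ Finset.univ with i ∈ S, E i)
      * depolarize p ((U : Matrix n n ℂ) * pureState (enc y) * (U : Matrix n n ℂ)ᴴ)).trace.re) := by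
  rw [Finset.sum_mul, trace_sum, Complex.re_sum]
  exact Measure.sum_ofReal_smul_dirac_apply
    (fun i => (hE i).re_trace_mul_depolarize_nonneg U hp0 hp1 (enc y)) S

theorem toReal_noisyCircuit_apply (hE : ∀ i, (E i).PosSemidef) (hp0 : 0 ≤ p) (hp1 : p ≤ 1)
    (y : Y) (S : Set (Fin m)) [DecidablePred (· ∈ S)] :
    (noisyCircuit enc U E p y S).toReal = ((∑ i ∈ Finset.univ with i ∈ S, E i)
      * depolarize p ((U : Matrix n n ℂ) * pureState (enc y) * (U : Matrix n n ℂ)ᴴ)).trace.re := by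
  rw [noisyCircuit_apply U hE hp0 hp1, ENNReal.toReal_ofReal]
  exact (posSemidef_sum _ fun i _ => hE i).re_trace_mul_depolarize_nonneg U hp0 hp1 (enc y)

theorem isFiniteMeasure_noisyCircuit (hE : ∀ i, (E i).PosSemidef) (hp0 : 0 ≤ p) (hp1 : p ≤ 1)
    (y : Y) : IsFiniteMeasure (noisyCircuit enc U E p y) := by
  classical
  exact ⟨by rw [noisyCircuit_apply U hE hp0 hp1]; exact ENNReal.ofReal_lt_top⟩

theorem measurable_noisyCircuit [MeasurableSpace Y] [MeasurableSpace (EuclideanSpace ℂ n)]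
    [BorelSpace (EuclideanSpace ℂ n)] (henc : Measurable enc) (hE : ∀ i, (E i).PosSemidef)
    (hp0 : 0 ≤ p) (hp1 : p ≤ 1) : Measurable (noisyCircuit enc U E p) := by
  classical
  refine Measure.measurable_of_measurable_coe _ fun S _ => ?_
  simp_rw [noisyCircuit_apply U hE hp0 hp1]
  have hcont : Continuous fun w : EuclideanSpace ℂ n => ((∑ i ∈ Finset.univ with i ∈ S, E i)
      * depolarize p ((U : Matrix n n ℂ) * pureState w * (U : Matrix n n ℂ)ᴴ)).trace.re := by
    unfold depolarize pureState
    fun_prop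
  exact (hcont.measurable.comp henc).ennreal_ofReal

end NoisyCircuit

theorem privacy_amplification_depolarizing
    {X Y : Type*} [MeasurableSpace Y]
    (Adj : X → X → Prop) (ε δ : ℝ) (hε : 0 ≤ ε)
    (A : X → Measure Y) (hA : ∀ x, IsProbabilityMeasure (A x))
    (hADP : DiffPrivate Adj A ε δ)
    {n : Type*} [Fintype n] [DecidableEq n] {m : ℕ}
    [MeasurableSpace (EuclideanSpace ℂ n)] [BorelSpace (EuclideanSpace ℂ n)]
    (enc : Y → EuclideanSpace ℂ n) (henc : Measurable enc)
    (hencNorm : ∀ y, ‖enc y‖ = 1)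
    (φ : ℝ)
    (hφle : ∀ y y' : Y, φ ≤ ‖⟪enc y, enc y'⟫_ℂ‖ ^ 2)
    (U : Matrix.unitaryGroup n ℂ)
    (E : Fin m → Matrix n n ℂ) (hE : ∀ i, (E i).PosSemidef)
    (hEsum : ∑ i, E i = 1)
    (p : ℝ) (hp0 : 0 ≤ p) (hp1 : p ≤ 1) :
    DiffPrivate Adj (fun x => (A x).bind (noisyCircuit enc U E p))
      ε ((1 - p) * Real.sqrt (1 - φ) * δ) := by
  classical
  have := isFiniteMeasure_noisyCircuit (enc := enc) U hE hp0 hp1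
  refine hADP.bind hA hε (measurable_noisyCircuit U henc hE hp0 hp1)
    (mul_nonneg (sub_nonneg.2 hp1) (Real.sqrt_nonneg _)) fun S _ y y' => ?_
  rw [toReal_noisyCircuit_apply U hE hp0 hp1, toReal_noisyCircuit_apply U hE hp0 hp1]
  calc _ ≤ (1 - p) * √(1 - ‖⟪enc y, enc y'⟫_ℂ‖ ^ 2) :=
        re_trace_mul_depolarize_sub_le U (posSemidef_sum _ fun i _ => hE i)
          (posSemidef_one_sub_sum hE hEsum _) hp1 (hencNorm y) (hencNorm y')
    _ ≤ (1 - p) * √(1 - φ) := by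
        gcongr
        exact hφle y y'
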